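/- For natural numbers m ≤ n with n > 0, 1 − (n)_m/n^m ≤ m(m−1)/(2n), where (n)_m = n(n−1)⋯(n−m+1) is the falling factorial. -/
import Mathlib


/-- For `m ≤ n`, `1 - (n)_m / n^m ≤ m(m-1)/(2n)`. -/
theorem one_sub_descFactorial_div_pow_le (m n : ℕ) (hmn : m ≤ n) (hn : 0 < n) :
    1 - (n.descFactorial m : ℝ) / (n : ℝ) ^ m ≤ (m * (m - 1) : ℝ) / (2 * n) := by
  induction m with
  | zero => simp
  | succ m ih =>
    have hm : m ≤ n := Nat.le_of_succ_le hmn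
    have ih' := ih hm
    have hnpos : (0:ℝ) < n := by exact_mod_cast hn
    set P : ℝ := (n.descFactorial m : ℝ) / (n : ℝ) ^ m with hPdef
    have hP1 : P ≤ 1 := by
      rw [hPdef, div_le_one (by positivity)]
      exact_mod_cast Nat.descFactorial_le_pow n m
    have hP0 : (0:ℝ) ≤ P := by positivity
    have hcast : ((n - m : ℕ) : ℝ) = (n : ℝ) - m := Nat.cast_sub hm
    have key : (n.descFactorial (m+1) : ℝ) / (n : ℝ) ^ (m+1)
        = ((n : ℝ) - m) / n * P := by
      rw [Nat.descFactorial_succ, hPdef]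
      push_cast [hcast]
      rw [pow_succ, div_mul_div_comm, mul_comm ((n:ℝ)) ((n:ℝ)^m)]
    rw [key]
    push_cast
    have expand : 1 - ((n:ℝ) - m) / n * P = (1 - P) + (m / n) * P := by
      field_simp
      ring
    have h2 : (m:ℝ) / n * P ≤ (m:ℝ) / n * 1 :=
      mul_le_mul_of_nonneg_left hP1 (by positivity)
    have heq : (m:ℝ) * (m - 1) / (2 * n) + (m:ℝ) / n * 1
        = ((m:ℝ) + 1) * ((m:ℝ) + 1 - 1) / (2 * n) := by
      field_simp
      ring
    linarith
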